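/- Let α ∈ (0,1), σ ∈ (1/2, 1], τ > 0, and let i ≥ 1 be an integer. Define c_i(α,σ) := ((i+σ+1)^{2−α} − 2(i+σ)^{2−α} + (i+σ−1)^{2−α})/(2−α) − ((i+σ+1)^{1−α} − 2(i+σ)^{1−α} + (i+σ−1)^{1−α})/2 and a_i(α,σ;τ) := c_i(α,σ)·τ^{−α}/Γ(2−α). Then a_i(α,σ;τ) = ((1−α)/Γ(2−α)) · ∫_{−1}^{1} (1−|y|)·( ((i+σ+y)τ)^{−α} + (ατ/2)·((i+σ+y)τ)^{−1−α} ) dy. -/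

import Mathlib

/-!
The tent `1 - |y|` is the Peano kernel of the second central difference: integrating by parts
on each half of `[-1, 1]` gives `∫_{-1}^{1} (1 - |y|) φ''(y) dy = φ(1) - 2 φ(0) + φ(-1)`.
The weight `c_i(α,σ)` is the second central difference at `s = i + σ` of
`g(x) = x^{2-α}/(2-α) - x^{1-α}/2`, and `g''(x) = (1-α) (x^{-α} + (α/2) x^{-1-α})`;
rescaling `x = s + y` by `τ` turns `τ^{-α} g''(s + y)` into `(1-α)` times the integrand.
-/

open intervalIntegral Real Set

/-- The i-th interior convolution weight `c_i(α,σ)` of the second-order approximation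
of the Caputo derivative of order `α` with intermediate parameter `σ`. -/
noncomputable def ci (α σ : ℝ) (i : ℕ) : ℝ :=
  (((i : ℝ) + σ + 1) ^ (2 - α) - 2 * ((i : ℝ) + σ) ^ (2 - α)
      + ((i : ℝ) + σ - 1) ^ (2 - α)) / (2 - α)
    - (((i : ℝ) + σ + 1) ^ (1 - α) - 2 * ((i : ℝ) + σ) ^ (1 - α)
      + ((i : ℝ) + σ - 1) ^ (1 - α)) / 2

theorem integral_sub_mul_eq_taylor_remainder {ψ ψ' ψ'' : ℝ → ℝ} {a b : ℝ}
    (hψ : ∀ y ∈ uIcc a b, HasDerivAt ψ (ψ' y) y)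
    (hψ' : ∀ y ∈ uIcc a b, HasDerivAt ψ' (ψ'' y) y)
    (hψ'' : IntervalIntegrable ψ'' MeasureTheory.volume a b) :
    ∫ y in a..b, (b - y) * ψ'' y = ψ b - ψ a - (b - a) * ψ' a := by
  have hderiv : ∀ y ∈ uIcc a b,
      HasDerivAt (fun y => (b - y) * ψ' y + ψ y) ((b - y) * ψ'' y) y := fun y hy =>
    ((((hasDerivAt_id' y).const_sub b).fun_mul (hψ' y hy)).fun_add (hψ y hy)).congr_deriv
      (by ring)
  rw [integral_eq_sub_of_hasDerivAt hderiv (hψ''.continuousOn_mul (by fun_prop))]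
  ring

theorem integral_one_sub_abs_mul_eq_second_difference {φ φ' φ'' : ℝ → ℝ}
    (hφ : ∀ y ∈ uIcc (-1 : ℝ) 1, HasDerivAt φ (φ' y) y)
    (hφ' : ∀ y ∈ uIcc (-1 : ℝ) 1, HasDerivAt φ' (φ'' y) y)
    (hφ'' : IntervalIntegrable φ'' MeasureTheory.volume (-1) 1) :
    ∫ y in (-1 : ℝ)..1, (1 - |y|) * φ'' y = φ 1 - 2 * φ 0 + φ (-1) := by
  have hleft : uIcc 0 (-1) ⊆ uIcc (-1 : ℝ) 1 := uIcc_subset_uIcc (by simp) (by simp)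
  have hright : uIcc 0 1 ⊆ uIcc (-1 : ℝ) 1 := uIcc_subset_uIcc (by simp) (by simp)
  have hint : IntervalIntegrable (fun y => (1 - |y|) * φ'' y) MeasureTheory.volume (-1) 1 :=
    hφ''.continuousOn_mul (by fun_prop)
  have left : ∫ y in (-1 : ℝ)..0, (1 - |y|) * φ'' y = φ (-1) - φ 0 + φ' 0 := by
    calc ∫ y in (-1 : ℝ)..0, (1 - |y|) * φ'' y
        = ∫ y in (0 : ℝ)..(-1), (-1 - y) * φ'' y := by
          rw [integral_symm, ← integral_neg]
          refine integral_congr fun y hy => ?_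
          rw [uIcc_of_ge (by norm_num)] at hy
          rw [abs_of_nonpos hy.2]
          ring
      _ = φ (-1) - φ 0 + φ' 0 := by
          rw [integral_sub_mul_eq_taylor_remainder (fun y hy => hφ y (hleft hy))
            (fun y hy => hφ' y (hleft hy)) (hφ''.mono_set hleft)]
          ring
  have right : ∫ y in (0 : ℝ)..1, (1 - |y|) * φ'' y = φ 1 - φ 0 - φ' 0 := by
    calc ∫ y in (0 : ℝ)..1, (1 - |y|) * φ'' y
        = ∫ y in (0 : ℝ)..1, (1 - y) * φ'' y := by
          refine integral_congr fun y hy => ?_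
          rw [uIcc_of_le (by norm_num)] at hy
          rw [abs_of_nonneg hy.1]
      _ = φ 1 - φ 0 - φ' 0 := by
          rw [integral_sub_mul_eq_taylor_remainder (fun y hy => hφ y (hright hy))
            (fun y hy => hφ' y (hright hy)) (hφ''.mono_set hright)]
          ring
  rw [← integral_add_adjacent_intervals (hint.mono_set (uIcc_subset_uIcc (by simp) (by simp)))
    (hint.mono_set hright), left, right]
  ring

noncomputable def ciPotential (α x : ℝ) : ℝ :=
  x ^ (2 - α) / (2 - α) - x ^ (1 - α) / 2

theorem ci_eq_second_difference (α σ : ℝ) (i : ℕ) :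
    ci α σ i = ciPotential α (i + σ + 1) - 2 * ciPotential α (i + σ)
      + ciPotential α (i + σ - 1) := by
  simp only [ci, ciPotential]
  ring

theorem hasDerivAt_ciPotential {α x : ℝ} (hα : α ≠ 2) (hx : 0 < x) :
    HasDerivAt (ciPotential α) (x ^ (1 - α) - (1 - α) / 2 * x ^ (-α)) x := by
  have h2α : 2 - α ≠ 0 := sub_ne_zero.mpr hα.symm
  refine (((hasDerivAt_rpow_const (p := 2 - α) (Or.inl hx.ne')).div_const _).sub
    ((hasDerivAt_rpow_const (p := 1 - α) (Or.inl hx.ne')).div_const _)).congr_deriv ?_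
  rw [show 2 - α - 1 = 1 - α by ring, show 1 - α - 1 = -α by ring]
  field_simp

theorem hasDerivAt_deriv_ciPotential {α x : ℝ} (hx : 0 < x) :
    HasDerivAt (fun x => x ^ (1 - α) - (1 - α) / 2 * x ^ (-α))
      ((1 - α) * (x ^ (-α) + α / 2 * x ^ (-1 - α))) x := by
  refine ((hasDerivAt_rpow_const (p := 1 - α) (Or.inl hx.ne')).sub
    ((hasDerivAt_rpow_const (p := -α) (Or.inl hx.ne')).const_mul _)).congr_deriv ?_
  rw [show 1 - α - 1 = -α by ring, show -α - 1 = -1 - α by ring]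
  ring

theorem mul_rpow_neg_add_mul_rpow_neg_one_sub {α u τ : ℝ} (hu : 0 < u) (hτ : 0 < τ) :
    (u * τ) ^ (-α) + α * τ / 2 * (u * τ) ^ (-1 - α)
      = τ ^ (-α) * (u ^ (-α) + α / 2 * u ^ (-1 - α)) := by
  have hτ' : τ ^ (-1 - α) = τ ^ (-α) * τ⁻¹ := by
    rw [show -1 - α = -α + -1 by ring, rpow_add hτ, rpow_neg_one]
  rw [mul_rpow hu.le hτ.le, mul_rpow hu.le hτ.le, hτ']
  field_simp

/-- integral representation of the normalized interior weight
`a_i(α,σ;τ) = c_i(α,σ)·τ^{−α}/Γ(2−α)` via the Peano kernel (1−|y|). -/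
theorem stmt_8 (α σ τ : ℝ) (i : ℕ)
    (hα : α ∈ Set.Ioo (0 : ℝ) 1) (hσ : σ ∈ Set.Ioc (1/2 : ℝ) 1)
    (hτ : 0 < τ) (hi : 1 ≤ i) :
    ci α σ i * τ ^ (-α) / Real.Gamma (2 - α) =
      (1 - α) / Real.Gamma (2 - α) *
        ∫ y in (-1 : ℝ)..1,
          (1 - |y|) * ((((i : ℝ) + σ + y) * τ) ^ (-α)
            + α * τ / 2 * (((i : ℝ) + σ + y) * τ) ^ (-1 - α)) := by
  set s : ℝ := i + σ
  have hpos : ∀ y ∈ uIcc (-1 : ℝ) 1, 0 < s + y := fun y hy => by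
    rw [uIcc_of_le (by norm_num)] at hy
    have : (1 : ℝ) ≤ i := by exact_mod_cast hi
    linarith [hσ.1, hy.1]
  have hA : ContinuousOn (fun y => (1 - α) * ((s + y) ^ (-α) + α / 2 * (s + y) ^ (-1 - α)))
      (uIcc (-1) 1) := by
    have hne (p : ℝ) : ∀ y ∈ uIcc (-1 : ℝ) 1, s + y ≠ 0 ∨ 0 ≤ p :=
      fun y hy => Or.inl (hpos y hy).ne'
    have hshift : ContinuousOn (fun y => s + y) (uIcc (-1) 1) := by fun_prop
    exact continuousOn_const.mul ((hshift.rpow_const (hne _)).add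
      (continuousOn_const.mul (hshift.rpow_const (hne _))))
  have peano := integral_one_sub_abs_mul_eq_second_difference
    (fun y hy => (hasDerivAt_ciPotential (by linarith [hα.2]) (hpos y hy)).comp_const_add s y)
    (fun y hy => (hasDerivAt_deriv_ciPotential (hpos y hy)).comp_const_add s y)
    hA.intervalIntegrable
  suffices ci α σ i * τ ^ (-α) = (1 - α) * ∫ y in (-1 : ℝ)..1,
      (1 - |y|) * (((s + y) * τ) ^ (-α) + α * τ / 2 * ((s + y) * τ) ^ (-1 - α)) by
    rw [this]; ring
  have hci : ci α σ i = ciPotential α (s + 1) - 2 * ciPotential α (s + 0)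
      + ciPotential α (s + -1) := by
    rw [add_zero, ← sub_eq_add_neg]; exact ci_eq_second_difference α σ i
  rw [← integral_const_mul, hci, ← peano, ← integral_mul_const]
  refine integral_congr fun y hy => ?_
  simp only [mul_rpow_neg_add_mul_rpow_neg_one_sub (hpos y hy) hτ]
  ring
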